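/- arXiv:2304.08531 — 3 statements merged into one kernel-verified Lean document; each statement's English description precedes it below -/
import Mathlib

section
/- Let Ω be the incidence matrix of a finite directed graph restricted to a subset C of edges. A row vector α on edges satisfies α Ω = 0 if and only if α lies in the span (over the integers, and hence over the rationals/reals) of signed indicator vectors of cycles contained entirely in C. -/
/-- The incidence matrix of a finite directed graph.  Here the edge-index type `Eg` plays the
role of the capacitive edge set `C`, so `inc hd tl` is the matrix `Ω` with rows indexed by `C`. -/
def inc {Eg Vt : Type*} [DecidableEq Vt] (hd tl : Eg → Vt) : Matrix Eg Vt ℝ :=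
  Matrix.of fun e v => if v = hd e then 1 else if v = tl e then -1 else 0

/-- `c : Eg → ℝ` is the signed indicator vector of a cycle: there is a closed walk
`v 0 - v 1 - ⋯ - v l - v 0` traversing distinct edges `e 0, …, e l`, edge `e j` joining `v j`
and `v (j+1)` (indices mod `l + 1`) with sign `σ j = ±1` according to orientation, and `c`
assigns `σ j` to `e j` and `0` to every other edge. -/
def IsCycleVec {Eg Vt : Type*} [DecidableEq Eg] (hd tl : Eg → Vt) (c : Eg → ℝ) : Prop :=
  ∃ (l : ℕ) (e : Fin (l + 1) → Eg) (v : Fin (l + 1) → Vt) (σ : Fin (l + 1) → ℤ),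
    Function.Injective e ∧
    (∀ j, (σ j = 1 ∧ tl (e j) = v j ∧ hd (e j) = v (j + 1)) ∨
          (σ j = -1 ∧ hd (e j) = v j ∧ tl (e j) = v (j + 1))) ∧
    c = fun f => ∑ j, if e j = f then (σ j : ℝ) else 0

/-! A vector `α` with `α Ω = 0` is a circulation. Reverse the edges on which it is negative;
by conservation, every vertex entered by an edge of its support is also left by one, so following
support edges must eventually close up into a cycle inside the support of `α`. Subtracting the
multiple of that cycle vector which kills one coordinate shrinks the support, and induction on its
size finishes. Conversely, a cycle vector telescopes to zero against `Ω`. -/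

open Function Set

theorem Submodule.le_span_of_exists_support_subset {ι K : Type*} [Field K] [Finite ι]
    {p : Submodule K (ι → K)} {s : Set (ι → K)} (hs : s ⊆ p)
    (h : ∀ x ∈ p, x ≠ 0 → ∃ c ∈ s, c ≠ 0 ∧ support c ⊆ support x) : p ≤ span K s := by
  intro x hx
  induction hn : (support x).ncard using Nat.strong_induction_on generalizing x with
  | _ n ih =>
  rcases eq_or_ne x 0 with rfl | hx0
  · exact zero_mem _
  obtain ⟨c, hcs, hc0, hcx⟩ := h x hx hx0
  obtain ⟨i, hi⟩ := Function.ne_iff.1 hc0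
  set y := x - (x i / c i) • c
  have hy : y ∈ p := sub_mem hx (smul_mem _ _ (hs hcs))
  have hyi : y i = 0 := by simp [y, div_mul_cancel₀ _ hi]
  have hyx : support y ⊂ support x := by
    refine ⟨(support_sub _ _).trans (union_subset subset_rfl
      ((support_const_smul_subset _ _).trans hcx)), fun hxy => hxy (hcx hi) hyi⟩
  have hy_span := ih _ (hn ▸ ncard_lt_ncard hyx (toFinite _)) hy rfl
  rw [show x = y + (x i / c i) • c by simp [y]]
  exact add_mem hy_span (smul_mem _ _ (subset_span hcs))

theorem Function.exists_iterate_mem_periodicPts {α : Type*} [Finite α] (f : α → α) (x : α) :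
    ∃ n, f^[n] x ∈ periodicPts f := by
  obtain ⟨m, n, hmn, heq⟩ := Finite.exists_ne_map_eq_of_infinite (f^[·] x)
  wlog hlt : m < n generalizing m n
  · exact this n m hmn.symm heq.symm (hmn.lt_or_gt.resolve_left hlt)
  refine ⟨m, mk_mem_periodicPts (Nat.sub_pos_of_lt hlt) ?_⟩
  rw [IsPeriodicPt, IsFixedPt, ← iterate_add_apply, Nat.sub_add_cancel hlt.le]
  exact heq.symm

section Graph

variable {Eg Vt : Type*} {hd tl : Eg → Vt}

theorem inc_apply_of_ne [DecidableEq Vt] {e : Eg} (he : hd e ≠ tl e) (w : Vt) :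
    inc hd tl e w = (if w = hd e then 1 else 0) - (if w = tl e then 1 else 0) := by
  by_cases h : w = hd e
  · simp [inc, h, he]
  · simp only [inc, Matrix.of_apply, h, if_false]
    split_ifs <;> norm_num

theorem IsCycleVec.vecMul_inc_eq_zero [Fintype Eg] [DecidableEq Eg] [DecidableEq Vt]
    (hne : ∀ e, hd e ≠ tl e) {c : Eg → ℝ} (hc : IsCycleVec hd tl c) :
    Matrix.vecMul c (inc hd tl) = 0 := by
  obtain ⟨l, e, v, σ, -, hstep, rfl⟩ := hc
  funext w
  have hterm : ∀ j, (σ j : ℝ) * inc hd tl (e j) w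
      = (if w = v (j + 1) then 1 else 0) - (if w = v j then 1 else 0) := by
    intro j
    rw [inc_apply_of_ne (hne (e j))]
    rcases hstep j with ⟨hσ, htl, hhd⟩ | ⟨hσ, hhd, htl⟩ <;> simp [hσ, htl, hhd]
  calc Matrix.vecMul (fun f => ∑ j, if e j = f then (σ j : ℝ) else 0) (inc hd tl) w
      = ∑ j, (σ j : ℝ) * inc hd tl (e j) w := by
        simp only [Matrix.vecMul, dotProduct, Finset.sum_mul, ite_mul, zero_mul]
        rw [Finset.sum_comm]
        simp
    _ = 0 := by
        rw [Finset.sum_congr rfl fun j _ => hterm j, Finset.sum_sub_distrib, sub_eq_zero]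
        exact Fintype.sum_equiv (Equiv.addRight 1) _ _ fun j => rfl

theorem exists_isCycleVec_of_mem_periodicPts [DecidableEq Eg] {σ : Eg → ℤ} {src tgt : Eg → Vt}
    (horient : ∀ e, (σ e = 1 ∧ tl e = src e ∧ hd e = tgt e) ∨
      (σ e = -1 ∧ hd e = src e ∧ tl e = tgt e))
    {S : Set Eg} {f : Eg → Eg} (hfS : MapsTo f S S) (hf : ∀ e ∈ S, src (f e) = tgt e)
    {x : Eg} (hxS : x ∈ S) (hx : x ∈ periodicPts f) :
    ∃ c, IsCycleVec hd tl c ∧ c ≠ 0 ∧ support c ⊆ S := by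
  obtain ⟨l, hl⟩ : ∃ l, minimalPeriod f x = l + 1 :=
    Nat.exists_eq_succ_of_ne_zero (minimalPeriod_pos_of_mem_periodicPts hx).ne'
  set E : Fin (l + 1) → Eg := fun j => f^[j] x
  have hES : ∀ j, E j ∈ S := fun j => hfS.iterate j hxS
  have hE_succ : ∀ j, f (E j) = E (j + 1) := by
    intro j
    show f (f^[j] x) = f^[((j + 1 : Fin (l + 1)) : ℕ)] x
    rw [Fin.val_add, Fin.val_one', Nat.add_mod_mod, ← iterate_succ_apply' f,
      ← iterate_mod_minimalPeriod_eq (n := j + 1), hl]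
  have hEinj : Injective E := fun i j hij =>
    Fin.ext (iterate_injOn_Iio_minimalPeriod (by simp [hl, i.is_le]) (by simp [hl, j.is_le]) hij)
  refine ⟨_, ⟨l, E, src ∘ E, σ ∘ E, hEinj, fun j => ?_, rfl⟩, ?_, ?_⟩
  · simpa [← hE_succ, hf _ (hES j)] using horient (E j)
  · intro hc
    have hc0 := congrFun hc (E 0)
    rw [Finset.sum_eq_single 0 (fun j _ hj => if_neg (hEinj.ne hj)) (by simp)] at hc0
    rcases horient x with ⟨hσ, -⟩ | ⟨hσ, -⟩ <;> simp [E, hσ] at hc0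
  · intro g hg
    obtain ⟨j, -, hj⟩ := Finset.exists_ne_zero_of_sum_ne_zero hg
    obtain rfl : E j = g := not_not.1 fun h => hj (if_neg h)
    exact hES j

/-- Tail of `e` once it is reoriented so that `α` flows forward along it. -/
noncomputable def flowSrc (hd tl : Eg → Vt) (α : Eg → ℝ) (e : Eg) : Vt :=
  if 0 < α e then tl e else hd e

noncomputable def flowTgt (hd tl : Eg → Vt) (α : Eg → ℝ) (e : Eg) : Vt :=
  if 0 < α e then hd e else tl e

theorem flow_orient (α : Eg → ℝ) (e : Eg) :
    ((if 0 < α e then 1 else -1 : ℤ) = 1 ∧ tl e = flowSrc hd tl α e ∧ hd e = flowTgt hd tl α e) ∨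
      ((if 0 < α e then 1 else -1 : ℤ) = -1 ∧ hd e = flowSrc hd tl α e ∧
        tl e = flowTgt hd tl α e) := by
  by_cases h : 0 < α e <;> simp [flowSrc, flowTgt, h]

theorem mul_inc_apply_eq_abs_mul [DecidableEq Vt] {e : Eg} (he : hd e ≠ tl e) (α : Eg → ℝ)
    (w : Vt) : α e * inc hd tl e w = |α e| *
      ((if flowTgt hd tl α e = w then 1 else 0) - (if flowSrc hd tl α e = w then 1 else 0)) := by
  rw [inc_apply_of_ne he]
  by_cases h : 0 < α e
  · simp [flowSrc, flowTgt, h, abs_of_pos h, eq_comm]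
  · simp [flowSrc, flowTgt, h, abs_of_nonpos (not_lt.1 h), eq_comm]
    ring

theorem exists_flowSrc_eq_flowTgt [Fintype Eg] [DecidableEq Vt] (hne : ∀ e, hd e ≠ tl e)
    {α : Eg → ℝ} (hα : Matrix.vecMul α (inc hd tl) = 0) {e : Eg}
    (he : α e ≠ 0) : ∃ f, α f ≠ 0 ∧ flowSrc hd tl α f = flowTgt hd tl α e := by
  set w := flowTgt hd tl α e
  have hbal : ∑ f with flowSrc hd tl α f = w, |α f| = ∑ f with flowTgt hd tl α f = w, |α f| := by
    have h0 := congrFun hα w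
    simp only [Matrix.vecMul, dotProduct, Pi.zero_apply, mul_inc_apply_eq_abs_mul (hne _),
      mul_sub, mul_ite, mul_one, mul_zero, Finset.sum_sub_distrib] at h0
    rw [Finset.sum_filter, Finset.sum_filter]
    linarith
  have hpos : 0 < ∑ f with flowSrc hd tl α f = w, |α f| := by
    rw [hbal]
    refine (abs_pos.2 he).trans_le (Finset.single_le_sum (f := fun f => |α f|)
      (fun _ _ => abs_nonneg _) ?_)
    simp [w]
  obtain ⟨f, hf, hfα⟩ := Finset.exists_ne_zero_of_sum_ne_zero hpos.ne'
  exact ⟨f, abs_ne_zero.1 hfα, (Finset.mem_filter.1 hf).2⟩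

theorem exists_isCycleVec_support_subset [Fintype Eg] [DecidableEq Eg] [DecidableEq Vt]
    (hne : ∀ e, hd e ≠ tl e) {α : Eg → ℝ}
    (hα : Matrix.vecMul α (inc hd tl) = 0) (hα0 : α ≠ 0) :
    ∃ c, IsCycleVec hd tl c ∧ c ≠ 0 ∧ support c ⊆ support α := by
  have hstep : ∀ e ∈ support α, ∃ f ∈ support α, flowSrc hd tl α f = flowTgt hd tl α e :=
    fun e he => exists_flowSrc_eq_flowTgt hne hα he
  choose! next hnextS hnext using hstep
  have hmaps : MapsTo next (support α) (support α) := hnextS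
  obtain ⟨e₀, he₀⟩ := support_nonempty_iff.2 hα0
  obtain ⟨n, hn⟩ := exists_iterate_mem_periodicPts next e₀
  exact exists_isCycleVec_of_mem_periodicPts (flow_orient α) hmaps hnext
    (hmaps.iterate n he₀) hn

end Graph

theorem ker_vecMulLinear_inc_eq_span {Eg Vt : Type*} [Fintype Eg] [DecidableEq Eg]
    [DecidableEq Vt] {hd tl : Eg → Vt} (hne : ∀ e, hd e ≠ tl e) :
    LinearMap.ker (Matrix.vecMulLinear (inc hd tl)) =
      Submodule.span ℝ {c : Eg → ℝ | IsCycleVec hd tl c} := by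
  have hcyc : {c | IsCycleVec hd tl c} ⊆ LinearMap.ker (Matrix.vecMulLinear (inc hd tl)) :=
    fun c hc => hc.vecMul_inc_eq_zero hne
  exact le_antisymm (Submodule.le_span_of_exists_support_subset hcyc
    fun α hα hα0 => exists_isCycleVec_support_subset hne hα hα0) (Submodule.span_le.2 hcyc)

theorem stmt3_general {Eg Vt : Type*} [Fintype Eg] [DecidableEq Eg] [DecidableEq Vt]
    (hd tl : Eg → Vt) (hne : ∀ e, hd e ≠ tl e) (α : Eg → ℝ) :
    Matrix.vecMul α (inc hd tl) = 0 ↔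
      α ∈ Submodule.span ℝ {c : Eg → ℝ | IsCycleVec hd tl c} :=
  SetLike.ext_iff.1 (ker_vecMulLinear_inc_eq_span hne) α

/-- A row vector `α` on edges satisfies `α Ω = 0` iff `α` lies in the span of the signed
indicator vectors of cycles. -/
theorem stmt3 {Eg Vt : Type*} [Fintype Eg] [DecidableEq Eg] [Fintype Vt] [DecidableEq Vt]
    (hd tl : Eg → Vt) (hne : ∀ e, hd e ≠ tl e) (α : Eg → ℝ) :
    Matrix.vecMul α (inc hd tl) = 0 ↔
      α ∈ Submodule.span ℝ {c : Eg → ℝ | IsCycleVec hd tl c} :=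
  stmt3_general hd tl hne α
end

section
/- Consider phase space ℝ^C × ℝ^V with the 2-form ω = Σ_{e,v} Ω_{ev} dq_e ∧ dφ_v determined by the reduced incidence matrix Ω. Restricted to the subspace spanned by the tree charges Q_f and tree branch fluxes Φ_f (f in a spanning forest T), ω takes the canonical Darboux form ω = Σ_{f∈T} dQ_f ∧ dΦ_f, and is thus a nondegenerate (symplectic) form there. -/
/-- On phase space `ℝ^C × ℝ^V`, the 2-form `ω = ∑ Ω_{ev} dq_e ∧ dφ_v`, evaluated on a pair of
tangent vectors `(q, φ)`, `(q', φ')`, equals the canonical Darboux form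
`∑_{f ∈ T} dQ_f ∧ dΦ_f` in the spanning-tree coordinates
`Q_f = q_f + ∑_{e ∉ T} K_{ef} q_e`, `Φ_f = ∑_v Ω_{fv} φ_v`; moreover the canonical form on the
`(Q, Φ)` coordinates is nondegenerate (symplectic). -/
theorem stmt12 {Eg Vt : Type*} [Fintype Eg] [DecidableEq Eg] [Fintype Vt] [DecidableEq Vt]
    (hd tl : Eg → Vt) (T : Finset Eg) (K : Eg → Eg → ℝ)
    (hK : ∀ e ∉ T, ∀ u, inc hd tl e u = ∑ f ∈ T, K e f * inc hd tl f u) :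
    (∀ (q q' : Eg → ℝ) (φ φ' : Vt → ℝ),
        ∑ e, ∑ u, inc hd tl e u * (q e * φ' u - q' e * φ u) =
          ∑ f ∈ T,
            ((q f + ∑ e ∈ Tᶜ, K e f * q e) * (∑ u, inc hd tl f u * φ' u) -
              (q' f + ∑ e ∈ Tᶜ, K e f * q' e) * (∑ u, inc hd tl f u * φ u))) ∧
      ∀ (a b : {f // f ∈ T} → ℝ),
        (∀ (a' b' : {f // f ∈ T} → ℝ), ∑ f, (a f * b' f - a' f * b f) = 0) →
          a = 0 ∧ b = 0 := by
  constructor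
  · intro q q' φ φ'
    have key : ∀ (q : Eg → ℝ) (φ' : Vt → ℝ),
        ∑ e, ∑ u, inc hd tl e u * (q e * φ' u) =
          ∑ f ∈ T, (q f + ∑ e ∈ Tᶜ, K e f * q e) * ∑ u, inc hd tl f u * φ' u := by
      intro q φ'
      have h1 : ∀ e : Eg, ∑ u, inc hd tl e u * (q e * φ' u)
          = q e * ∑ u, inc hd tl e u * φ' u := by
        intro e
        rw [Finset.mul_sum]
        exact Finset.sum_congr rfl fun u _ => by ring
      simp_rw [h1]
      rw [← Finset.sum_add_sum_compl T]
      have h2 : ∑ e ∈ Tᶜ, q e * ∑ u, inc hd tl e u * φ' u =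
          ∑ f ∈ T, (∑ e ∈ Tᶜ, K e f * q e) * ∑ u, inc hd tl f u * φ' u := by
        have h3 : ∀ e ∈ Tᶜ, q e * ∑ u, inc hd tl e u * φ' u =
            ∑ f ∈ T, (K e f * q e) * ∑ u, inc hd tl f u * φ' u := by
          intro e he
          have he' := Finset.mem_compl.mp he
          simp_rw [hK e he', Finset.sum_mul]
          rw [Finset.sum_comm, Finset.mul_sum]
          refine Finset.sum_congr rfl fun f _ => ?_
          rw [Finset.mul_sum, Finset.mul_sum]
          exact Finset.sum_congr rfl fun u _ => by ring
        rw [Finset.sum_congr rfl h3, Finset.sum_comm]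
        exact Finset.sum_congr rfl fun f _ => (Finset.sum_mul _ _ _).symm
      rw [h2, ← Finset.sum_add_distrib]
      exact Finset.sum_congr rfl fun f _ => by ring
    have hL : ∑ e, ∑ u, inc hd tl e u * (q e * φ' u - q' e * φ u) =
        (∑ e, ∑ u, inc hd tl e u * (q e * φ' u)) -
          (∑ e, ∑ u, inc hd tl e u * (q' e * φ u)) := by
      rw [← Finset.sum_sub_distrib]
      refine Finset.sum_congr rfl fun e _ => ?_
      rw [← Finset.sum_sub_distrib]
      exact Finset.sum_congr rfl fun u _ => by ring
    rw [hL, key q φ', key q' φ, ← Finset.sum_sub_distrib]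
  · intro a b h
    constructor
    · funext f
      have h0 := h 0 a
      simp only [Pi.zero_apply, zero_mul, sub_zero] at h0
      have := (Finset.sum_eq_zero_iff_of_nonneg
        (fun g _ => mul_self_nonneg (a g))).mp h0 f (Finset.mem_univ f)
      simpa [mul_self_eq_zero] using this
    · funext f
      have h0 := h b 0
      simp only [Pi.zero_apply, mul_zero, zero_sub] at h0
      have h0' : ∑ g, b g * b g = 0 := by
        have := neg_eq_zero.mp (by simpa [Finset.sum_neg_distrib] using h0)
        simpa using this
      have := (Finset.sum_eq_zero_iff_of_nonneg
        (fun g _ => mul_self_nonneg (b g))).mp h0' f (Finset.mem_univ f)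
      simpa [mul_self_eq_zero] using this
end

section
/- Under the hypotheses above, with the circuit graph (V, E) connected: the linear functionals q ↦ Q_J for J ∈ Γ_C span a space of dimension exactly |Γ_C| − 1; i.e., any |Γ_C| − 1 of them are linearly independent and the only linear relation is Σ_J Q_J = 0. -/
/-- Undirected adjacency through the edges in `S`. -/
def Adj {Eg Vt : Type*} (hd tl : Eg → Vt) (S : Set Eg) (u w : Vt) : Prop :=
  ∃ e ∈ S, (tl e = u ∧ hd e = w) ∨ (hd e = u ∧ tl e = w)

/-! Write `T c := ∑_J c_J Q_J` for `c : Γ_C → ℝ`. Since `Q_J` collects the incidence rows over the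
vertices of `J`, `(T c)_e = c_{[hd e]} - c_{[tl e]}` on every capacitive edge `e`: `T` is the
coboundary of `c` viewed as a potential on the vertices. Inductive edges never leave a component,
so `T c = 0` forces `c` to agree across every edge of `(V, E)`, hence to be constant by
connectedness. Thus `ker T` is the line of constants and rank–nullity gives `|Γ_C| - 1`. -/

theorem Relation.ReflTransGen.eq_of_rel_imp_eq {α β : Type*} {r : α → α → Prop} {f : α → β}
    (h : ∀ a b, r a b → f a = f b) {a b : α} (hab : Relation.ReflTransGen r a b) : f a = f b := by
  simpa [Relation.reflTransGen_eq_self] using hab.lift f h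

section IslandCharge

variable {Eg Vt : Type*} [Fintype Vt] [DecidableEq Vt] (hd tl : Eg → Vt)

theorem sum_mul_inc_eq_sub (hne : ∀ e, hd e ≠ tl e) (g : Vt → ℝ) (e : Eg) :
    ∑ v, g v * inc hd tl e v = g (hd e) - g (tl e) := by
  have hsplit : ∀ v, g v * inc hd tl e v
      = (if v = hd e then g v else 0) + (if v = tl e then -g v else 0) := by
    intro v
    simp only [inc, Matrix.of_apply]
    by_cases h₁ : v = hd e
    · subst h₁; simp [hne e]
    · by_cases h₂ : v = tl e <;> simp [h₁, h₂, (hne e).symm]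
  simp [hsplit, Finset.sum_add_distrib, sub_eq_add_neg]

variable (C : Set Eg) (s : Setoid Vt) [DecidableEq (Quotient s)]

/-- The charge functional `Q_J` of the class `J`, as a vector on the capacitive edges. -/
def islandCharge (J : Quotient s) : {e // e ∈ C} → ℝ :=
  fun e => ∑ v ∈ Finset.univ.filter (fun v => Quotient.mk s v = J), inc hd tl e.1 v

variable {hd tl C s}

theorem linearCombination_islandCharge_apply [Fintype (Quotient s)] (hne : ∀ e, hd e ≠ tl e)
    (c : Quotient s → ℝ) (e : {e // e ∈ C}) :
    Fintype.linearCombination ℝ (islandCharge hd tl C s) c e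
      = c (Quotient.mk s (hd e.1)) - c (Quotient.mk s (tl e.1)) := by
  calc Fintype.linearCombination ℝ (islandCharge hd tl C s) c e
      = ∑ J, ∑ v ∈ Finset.univ.filter (fun v => Quotient.mk s v = J),
          c (Quotient.mk s v) * inc hd tl e.1 v := by
        simp only [Fintype.linearCombination_apply, Finset.sum_apply, Pi.smul_apply,
          smul_eq_mul, islandCharge, Finset.mul_sum]
        refine Finset.sum_congr rfl fun J _ => Finset.sum_congr rfl fun v hv => ?_
        rw [(Finset.mem_filter.mp hv).2]
    _ = ∑ v, c (Quotient.mk s v) * inc hd tl e.1 v :=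
        Finset.sum_fiberwise _ _ _
    _ = c (Quotient.mk s (hd e.1)) - c (Quotient.mk s (tl e.1)) :=
        sum_mul_inc_eq_sub hd tl hne _ _

theorem mem_ker_linearCombination_islandCharge_iff [Fintype (Quotient s)]
    (hne : ∀ e, hd e ≠ tl e) (hCcompl : ∀ e ∉ C, Quotient.mk s (hd e) = Quotient.mk s (tl e))
    (hconn : ∀ u w : Vt, Relation.ReflTransGen (Adj hd tl Set.univ) u w) (c : Quotient s → ℝ) :
    c ∈ LinearMap.ker (Fintype.linearCombination ℝ (islandCharge hd tl C s)) ↔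
      ∀ J J', c J = c J' := by
  rw [LinearMap.mem_ker, funext_iff]
  simp only [linearCombination_islandCharge_apply hne, Pi.zero_apply, sub_eq_zero]
  constructor
  · intro hc
    have hedge : ∀ e, c (Quotient.mk s (hd e)) = c (Quotient.mk s (tl e)) := fun e => by
      by_cases he : e ∈ C
      · exact hc ⟨e, he⟩
      · rw [hCcompl e he]
    have hadj : ∀ u w, Adj hd tl Set.univ u w → c (Quotient.mk s u) = c (Quotient.mk s w) := by
      rintro u w ⟨e, -, ⟨rfl, rfl⟩ | ⟨rfl, rfl⟩⟩
      exacts [(hedge e).symm, hedge e]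
    rintro ⟨u⟩ ⟨w⟩
    exact (hconn u w).eq_of_rel_imp_eq hadj
  · exact fun hc e => hc _ _

theorem finrank_ker_linearCombination_islandCharge [Fintype (Quotient s)] [Nonempty (Quotient s)]
    (hne : ∀ e, hd e ≠ tl e) (hCcompl : ∀ e ∉ C, Quotient.mk s (hd e) = Quotient.mk s (tl e))
    (hconn : ∀ u w : Vt, Relation.ReflTransGen (Adj hd tl Set.univ) u w) :
    Module.finrank ℝ (LinearMap.ker (Fintype.linearCombination ℝ (islandCharge hd tl C s))) = 1 := by
  obtain ⟨J₀⟩ := ‹Nonempty (Quotient s)›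
  have hker : LinearMap.ker (Fintype.linearCombination ℝ (islandCharge hd tl C s))
      = Submodule.span ℝ {fun _ => 1} := by
    ext c
    rw [mem_ker_linearCombination_islandCharge_iff hne hCcompl hconn, Submodule.mem_span_singleton]
    constructor
    · exact fun hc => ⟨c J₀, funext fun J => by simp [hc J₀ J]⟩
    · rintro ⟨a, rfl⟩ J J'
      rfl
  rw [hker, finrank_span_singleton]
  exact Function.ne_iff.mpr ⟨J₀, one_ne_zero⟩

theorem finrank_span_range_islandCharge (hne : ∀ e, hd e ≠ tl e)
    (hCcompl : ∀ e ∉ C, Quotient.mk s (hd e) = Quotient.mk s (tl e))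
    (hconn : ∀ u w : Vt, Relation.ReflTransGen (Adj hd tl Set.univ) u w) :
    Module.finrank ℝ (Submodule.span ℝ (Set.range (islandCharge hd tl C s)))
      = Nat.card (Quotient s) - 1 := by
  have : Fintype (Quotient s) := Fintype.ofFinite _
  rw [← Fintype.range_linearCombination]
  have hrank := LinearMap.finrank_range_add_finrank_ker
    (Fintype.linearCombination ℝ (islandCharge hd tl C s))
  rw [Module.finrank_fintype_fun_eq_card, ← Nat.card_eq_fintype_card] at hrank
  rcases isEmpty_or_nonempty (Quotient s) with hempty | hnonempty
  · rw [Nat.card_of_isEmpty] at hrank ⊢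
    omega
  · rw [finrank_ker_linearCombination_islandCharge hne hCcompl hconn] at hrank
    omega

end IslandCharge

theorem stmt14_general {Eg Vt : Type*} [Fintype Vt] [DecidableEq Vt]
    (hd tl : Eg → Vt) (hne : ∀ e, hd e ≠ tl e) (C : Set Eg)
    [DecidableEq (Quotient (Relation.EqvGen.setoid (Adj hd tl Cᶜ)))]
    (hconn : ∀ u w : Vt, Relation.ReflTransGen (Adj hd tl Set.univ) u w) :
    Module.finrank ℝ
        (Submodule.span ℝ
          (Set.range fun J : Quotient (Relation.EqvGen.setoid (Adj hd tl Cᶜ)) =>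
            fun e : {e // e ∈ C} =>
              ∑ v ∈ Finset.univ.filter
                  (fun v : Vt =>
                    Quotient.mk (Relation.EqvGen.setoid (Adj hd tl Cᶜ)) v = J),
                inc hd tl e.1 v)) =
      Nat.card (Quotient (Relation.EqvGen.setoid (Adj hd tl Cᶜ))) - 1 :=
  finrank_span_range_islandCharge hne
    (fun e he => Quotient.sound (Relation.EqvGen.rel _ _ ⟨e, he, .inr ⟨rfl, rfl⟩⟩)) hconn

/-- In a connected circuit `(V, E)` with capacitive edges `C` and inductive edges `Cᶜ`, the
island-charge functionals `Q_J : q ↦ ∑_{v ∈ J} ∑_{e ∈ C} q_e Ω_{ev}` (one for each connected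
component `J` of the inductive subgraph, represented here as vectors on `C`) span a space of
dimension exactly `|Γ_C| - 1`, the unique relation being `∑_J Q_J = 0`. -/
theorem stmt14 {Eg Vt : Type*} [Fintype Eg] [Fintype Vt] [DecidableEq Vt]
    (hd tl : Eg → Vt) (hne : ∀ e, hd e ≠ tl e) (C : Set Eg) [DecidablePred (· ∈ C)]
    [Fintype (Quotient (Relation.EqvGen.setoid (Adj hd tl Cᶜ)))]
    [DecidableEq (Quotient (Relation.EqvGen.setoid (Adj hd tl Cᶜ)))]
    (hconn : ∀ u w : Vt, Relation.ReflTransGen (Adj hd tl Set.univ) u w) :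
    Module.finrank ℝ
        (Submodule.span ℝ
          (Set.range fun J : Quotient (Relation.EqvGen.setoid (Adj hd tl Cᶜ)) =>
            fun e : {e // e ∈ C} =>
              ∑ v ∈ Finset.univ.filter
                  (fun v : Vt =>
                    Quotient.mk (Relation.EqvGen.setoid (Adj hd tl Cᶜ)) v = J),
                inc hd tl e.1 v)) =
      Nat.card (Quotient (Relation.EqvGen.setoid (Adj hd tl Cᶜ))) - 1 :=
  stmt14_general hd tl hne C hconn
end
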